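/- arXiv:2603.04876 — 5 statements merged into one kernel-verified Lean document; each statement's English description precedes it below -/
import Mathlib

section
/- Let G be a connected simple graph on n ≥ 3 vertices, let M be a maximal matching of G, and let A be a maximal independent set of G contained in the union of the edges of M. Then the neighborhood N_G(A) is a vertex cover of G. -/
open MvPolynomial

namespace PaperRV

variable {V : Type*}

/-- `A` is an independent set of `G`. -/
def IsIndep (G : SimpleGraph V) (A : Set V) : Prop :=
  ∀ u ∈ A, ∀ v ∈ A, ¬ G.Adj u v

/-- The neighbourhood `N_G(A)` of a set of vertices `A`. -/
def nbhd (G : SimpleGraph V) (A : Set V) : Set V :=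
  {v | ∃ u ∈ A, G.Adj u v}

/-- `C` is a vertex cover of `G`. -/
def IsVertexCover (G : SimpleGraph V) (C : Set V) : Prop :=
  ∀ ⦃u v⦄, G.Adj u v → u ∈ C ∨ v ∈ C

/-- `M` is a matching of `G`: a set of pairwise disjoint edges. -/
def IsMatching (G : SimpleGraph V) (M : Finset (Sym2 V)) : Prop :=
  (↑M : Set (Sym2 V)) ⊆ G.edgeSet ∧
    ∀ e ∈ M, ∀ f ∈ M, e ≠ f → ∀ v : V, v ∈ e → v ∉ f

/-- `M` is a maximal matching of `G`. -/
def IsMaximalMatching (G : SimpleGraph V) (M : Finset (Sym2 V)) : Prop :=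
  IsMatching G M ∧ ∀ M', IsMatching G M' → M ⊆ M' → M' = M

/-- `M` is an induced matching of `G`: the only edges of `G` contained in the union
of the edges of `M` are those of `M`. -/
def IsInducedMatching (G : SimpleGraph V) (M : Finset (Sym2 V)) : Prop :=
  IsMatching G M ∧ ∀ e ∈ G.edgeSet, (∀ v ∈ e, ∃ f ∈ M, v ∈ f) → e ∈ M

variable {G : SimpleGraph V}

theorem IsMatching.insert [DecidableEq V] {M : Finset (Sym2 V)} (hM : IsMatching G M) {u v : V}
    (huv : G.Adj u v) (hu : ∀ e ∈ M, u ∉ e) (hv : ∀ e ∈ M, v ∉ e) :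
    IsMatching G (insert s(u, v) M) := by
  have hfree : ∀ e ∈ M, ∀ x ∈ s(u, v), x ∉ e := by
    intro e he x hx
    rcases Sym2.mem_iff.mp hx with rfl | rfl
    exacts [hu e he, hv e he]
  refine ⟨?_, ?_⟩
  · rw [Finset.coe_insert]
    exact Set.insert_subset huv hM.1
  · intro e he f hf hef x hxe hxf
    rcases Finset.mem_insert.mp he with rfl | he <;>
      rcases Finset.mem_insert.mp hf with rfl | hf
    · exact hef rfl
    · exact hfree f hf x hxe hxf
    · exact hfree e he x hxf hxe
    · exact hM.2 e he f hf hef x hxe hxf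

theorem IsMaximalMatching.exists_mem_of_adj {M : Finset (Sym2 V)} (hM : IsMaximalMatching G M)
    {u v : V} (huv : G.Adj u v) : (∃ e ∈ M, u ∈ e) ∨ ∃ e ∈ M, v ∈ e := by
  classical
  by_contra! h
  obtain ⟨hu, hv⟩ := h
  have hnew : s(u, v) ∉ M := fun h => hu _ h (Sym2.mem_mk_left u v)
  exact hnew (hM.2 _ (hM.1.insert huv hu hv) (Finset.subset_insert _ _) ▸
    Finset.mem_insert_self _ _)

theorem IsIndep.insert {A : Set V} (hA : IsIndep G A) {w : V} (hw : w ∉ nbhd G A) :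
    IsIndep G (insert w A) := by
  rintro x (rfl | hx) y (rfl | hy) hxy
  · exact G.loopless.irrefl _ hxy
  · exact hw ⟨y, hy, hxy.symm⟩
  · exact hw ⟨x, hx, hxy⟩
  · exact hA x hx y hy hxy

theorem mem_or_mem_nbhd_of_maximal {S A : Set V} (hAS : A ⊆ S) (hA : IsIndep G A)
    (hAmax : ∀ B ⊆ S, IsIndep G B → A ⊆ B → B = A) {w : V} (hw : w ∈ S) :
    w ∈ A ∨ w ∈ nbhd G A := by
  by_contra! h
  obtain ⟨hwA, hwN⟩ := h
  have hB := hAmax (insert w A) (Set.insert_subset hw hAS) (hA.insert hwN)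
    (Set.subset_insert _ _)
  exact hwA (hB ▸ Set.mem_insert w A)

theorem isVertexCover_nbhd {S A : Set V} (hS : ∀ ⦃u v⦄, G.Adj u v → u ∈ S ∨ v ∈ S)
    (hSA : ∀ w ∈ S, w ∈ A ∨ w ∈ nbhd G A) : IsVertexCover G (nbhd G A) := by
  intro u v huv
  rcases hS huv with hu | hv
  · exact (hSA u hu).elim (fun hA => Or.inr ⟨u, hA, huv⟩) Or.inl
  · exact (hSA v hv).elim (fun hA => Or.inl ⟨v, hA, huv.symm⟩) Or.inr

theorem stmt0_general {V : Type*} (G : SimpleGraph V)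
    (M : Finset (Sym2 V)) (hM : IsMaximalMatching G M)
    (A : Set V) (hAsub : A ⊆ {v | ∃ e ∈ M, v ∈ e}) (hAind : IsIndep G A)
    (hAmax : ∀ B : Set V, B ⊆ {v | ∃ e ∈ M, v ∈ e} → IsIndep G B → A ⊆ B → B = A) :
    IsVertexCover G (nbhd G A) :=
  isVertexCover_nbhd (fun _ _ huv => hM.exists_mem_of_adj huv)
    (fun _ hw => mem_or_mem_nbhd_of_maximal hAsub hAind hAmax hw)

/-- If `M` is a maximal matching of a connected graph `G` on `n ≥ 3` vertices and `A` is a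
maximal independent set of `G` contained in the union of the edges of `M`, then `N_G(A)` is a
vertex cover of `G`. -/
theorem stmt0 {V : Type*} [Fintype V] (G : SimpleGraph V) (hn : 3 ≤ Fintype.card V)
    (hG : G.Connected) (M : Finset (Sym2 V)) (hM : IsMaximalMatching G M)
    (A : Set V) (hAsub : A ⊆ {v | ∃ e ∈ M, v ∈ e}) (hAind : IsIndep G A)
    (hAmax : ∀ B : Set V, B ⊆ {v | ∃ e ∈ M, v ∈ e} → IsIndep G B → A ⊆ B → B = A) :
    IsVertexCover G (nbhd G A) :=
  stmt0_general G M hM A hAsub hAind hAmax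

end PaperRV
end

section
/- Let G be a simple graph on vertex set {x_1,…,x_m} and let W_G be the whisker graph obtained from G by adding new vertices y_1,…,y_m and edges {x_i, y_i} for each i. Then the induced matching number of W_G equals the independence number of G: im(W_G) = α(G). -/
open MvPolynomial

namespace PaperRV

variable {V : Type*}

/-- The induced matching number `im(G)`. -/
noncomputable def indMatchNum (G : SimpleGraph V) [Fintype V] : ℕ :=
  sSup {k | ∃ M, IsInducedMatching G M ∧ M.card = k}

/-- The independence number `α(G)`. -/
noncomputable def indepNum (G : SimpleGraph V) [Fintype V] : ℕ :=
  sSup {k | ∃ A : Finset V, IsIndep G ↑A ∧ A.card = k}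

/-- The whisker graph `W_G` of `G`: a pendant vertex `Sum.inr v` is attached by an edge
to each vertex `Sum.inl v` of (the copy of) `G`. -/
def whisker (G : SimpleGraph V) : SimpleGraph (V ⊕ V) :=
  SimpleGraph.fromRel (fun a b =>
    (∃ u v, G.Adj u v ∧ a = Sum.inl u ∧ b = Sum.inl v) ∨ (∃ u, a = Sum.inl u ∧ b = Sum.inr u))

lemma whisker_adj (G : SimpleGraph V) {a b : V ⊕ V} :
    (whisker G).Adj a b ↔
      (∃ u v, G.Adj u v ∧ a = Sum.inl u ∧ b = Sum.inl v) ∨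
      (∃ u, a = Sum.inl u ∧ b = Sum.inr u) ∨
      (∃ u, a = Sum.inr u ∧ b = Sum.inl u) := by
  constructor
  · rintro ⟨hne, h | h⟩
    · rcases h with ⟨u, v, h, rfl, rfl⟩ | ⟨u, rfl, rfl⟩
      · exact Or.inl ⟨u, v, h, rfl, rfl⟩
      · exact Or.inr (Or.inl ⟨u, rfl, rfl⟩)
    · rcases h with ⟨u, v, h, rfl, rfl⟩ | ⟨u, rfl, rfl⟩
      · exact Or.inl ⟨v, u, h.symm, rfl, rfl⟩
      · exact Or.inr (Or.inr ⟨u, rfl, rfl⟩)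
  · rintro (⟨u, v, h, rfl, rfl⟩ | ⟨u, rfl, rfl⟩ | ⟨u, rfl, rfl⟩)
    · exact ⟨by simp [h.ne], Or.inl (Or.inl ⟨u, v, h, rfl, rfl⟩)⟩
    · exact ⟨by simp, Or.inl (Or.inr ⟨u, rfl, rfl⟩)⟩
    · exact ⟨by simp, Or.inr (Or.inr ⟨u, rfl, rfl⟩)⟩

lemma exists_inl_mem {G : SimpleGraph V} {e : Sym2 (V ⊕ V)}
    (he : e ∈ (whisker G).edgeSet) : ∃ u, Sum.inl u ∈ e := by
  induction e using Sym2.ind with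
  | _ a b =>
    rw [SimpleGraph.mem_edgeSet, whisker_adj] at he
    rcases he with ⟨u, v, _, rfl, rfl⟩ | ⟨u, rfl, rfl⟩ | ⟨u, rfl, rfl⟩
    · exact ⟨u, by simp⟩
    · exact ⟨u, by simp⟩
    · exact ⟨u, by simp⟩

/-- From an induced matching of the whisker graph, produce an independent set of the
same size. -/
lemma indep_of_inducedMatching {G : SimpleGraph V} {M : Finset (Sym2 (V ⊕ V))}
    (hM : IsInducedMatching (whisker G) M) :
    ∃ A : Finset V, IsIndep G ↑A ∧ A.card = M.card := by
  classical
  have hinl : ∀ e ∈ M, ∃ u, Sum.inl u ∈ e := fun e he =>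
    exists_inl_mem (hM.1.1 he)
  set g : {e // e ∈ M} → V := fun e => (hinl e.1 e.2).choose with hg
  have hgmem : ∀ e : {e // e ∈ M}, Sum.inl (g e) ∈ e.1 := fun e =>
    (hinl e.1 e.2).choose_spec
  refine ⟨M.attach.image g, ?_, ?_⟩
  · rintro u hu v hv hadj
    simp only [Finset.coe_image, Set.mem_image, Finset.mem_coe, Finset.mem_attach] at hu hv
    obtain ⟨e, -, rfl⟩ := hu
    obtain ⟨f, -, rfl⟩ := hv
    have huv : g e ≠ g f := hadj.ne
    have hef : e.1 ≠ f.1 := by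
      rintro h
      exact huv (by rw [Subtype.ext h])
    -- the edge s(inl (g e), inl (g f)) is a whisker edge covered by M
    have hedge : s(Sum.inl (g e), Sum.inl (g f)) ∈ (whisker G).edgeSet := by
      rw [SimpleGraph.mem_edgeSet, whisker_adj]
      exact Or.inl ⟨g e, g f, hadj, rfl, rfl⟩
    have hcov : ∀ v ∈ s(Sum.inl (g e), Sum.inl (g f)), ∃ m ∈ M, v ∈ m := by
      intro v hv
      rw [Sym2.mem_iff] at hv
      rcases hv with rfl | rfl
      · exact ⟨e.1, e.2, hgmem e⟩
      · exact ⟨f.1, f.2, hgmem f⟩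
    have hmem := hM.2 _ hedge hcov
    by_cases h : s(Sum.inl (g e), Sum.inl (g f)) = e.1
    · have : Sum.inl (g f) ∈ e.1 := h ▸ (by simp : Sum.inl (g f) ∈ s(Sum.inl (g e), Sum.inl (g f)))
      exact hM.1.2 e.1 e.2 f.1 f.2 hef _ this (hgmem f)
    · exact hM.1.2 _ hmem e.1 e.2 (fun hq => h hq) _ (by simp) (hgmem e)
  · rw [Finset.card_image_of_injective _ ?_, Finset.card_attach]
    intro e f h
    by_contra hne
    have hef : e.1 ≠ f.1 := fun hq => hne (Subtype.ext hq)
    exact hM.1.2 e.1 e.2 f.1 f.2 hef _ (hgmem e) (h ▸ hgmem f)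

/-- From an independent set, produce an induced matching of the whisker graph of the
same size. -/
lemma inducedMatching_of_indep {G : SimpleGraph V} {A : Finset V}
    (hA : IsIndep G ↑A) :
    ∃ M : Finset (Sym2 (V ⊕ V)), IsInducedMatching (whisker G) M ∧ M.card = A.card := by
  classical
  refine ⟨A.image (fun v => s(Sum.inl v, Sum.inr v)), ⟨⟨?_, ?_⟩, ?_⟩, ?_⟩
  · intro e he
    simp only [Finset.coe_image, Set.mem_image, Finset.mem_coe] at he
    obtain ⟨v, -, rfl⟩ := he
    rw [SimpleGraph.mem_edgeSet, whisker_adj]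
    exact Or.inr (Or.inl ⟨v, rfl, rfl⟩)
  · intro e he f hf hef v hve hvf
    simp only [Finset.mem_image] at he hf
    obtain ⟨a, -, rfl⟩ := he
    obtain ⟨b, -, rfl⟩ := hf
    rw [Sym2.mem_iff] at hve hvf
    rcases hve with rfl | rfl <;> rcases hvf with h | h <;>
      first
        | (exact hef (by rw [Sum.inl.injEq] at h; rw [h]))
        | (exact hef (by rw [Sum.inr.injEq] at h; rw [h]))
        | exact absurd h (by simp)
  · intro e he hcov
    have hmemA : ∀ u : V, Sum.inl u ∈ e → u ∈ A ∨ False := by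
      intro u hu
      obtain ⟨f, hf, huf⟩ := hcov _ hu
      simp only [Finset.mem_image] at hf
      obtain ⟨a, ha, rfl⟩ := hf
      rw [Sym2.mem_iff] at huf
      rcases huf with h | h
      · rw [Sum.inl.injEq] at h; exact Or.inl (h ▸ ha)
      · exact absurd h (by simp)
    have hmemA' : ∀ u : V, Sum.inl u ∈ e → u ∈ A := fun u hu =>
      (hmemA u hu).resolve_right id
    induction e using Sym2.ind with
    | _ a b =>
      rw [SimpleGraph.mem_edgeSet, whisker_adj] at he
      rcases he with ⟨u, v, h, rfl, rfl⟩ | ⟨u, rfl, rfl⟩ | ⟨u, rfl, rfl⟩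
      · exact absurd h (hA u (hmemA' u (by simp)) v (hmemA' v (by simp)))
      · have : u ∈ A := hmemA' u (by simp)
        exact Finset.mem_image.2 ⟨u, this, rfl⟩
      · have : u ∈ A := hmemA' u (by simp)
        rw [Sym2.eq_swap]
        exact Finset.mem_image.2 ⟨u, this, rfl⟩
  · refine Finset.card_image_of_injective _ ?_
    intro a b h
    rw [Sym2.eq_iff] at h
    rcases h with ⟨h, -⟩ | ⟨h, -⟩
    · exact Sum.inl.injEq a b ▸ h
    · exact absurd h (by simp)

/-- For the whisker graph `W_G` of `G`, `im(W_G) = α(G)`. -/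
theorem stmt6 {V : Type*} [Fintype V] (G : SimpleGraph V) :
    indMatchNum (whisker G) = indepNum G := by
  classical
  have hbddM : BddAbove {k | ∃ M, IsInducedMatching (whisker G) M ∧ M.card = k} := by
    refine ⟨Fintype.card (Sym2 (V ⊕ V)), ?_⟩
    rintro k ⟨M, -, rfl⟩
    simpa using Finset.card_le_univ M
  have hbddA : BddAbove {k | ∃ A : Finset V, IsIndep G ↑A ∧ A.card = k} := by
    refine ⟨Fintype.card V, ?_⟩
    rintro k ⟨A, -, rfl⟩
    simpa using Finset.card_le_univ A
  apply le_antisymm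
  · apply csSup_le
    · refine ⟨0, ∅, ⟨⟨by simp, by simp⟩, ?_⟩, by simp⟩
      intro e he hcov
      obtain ⟨u, hu⟩ := exists_inl_mem he
      obtain ⟨f, hf, -⟩ := hcov _ hu
      simp at hf
    · rintro k ⟨M, hM, rfl⟩
      obtain ⟨A, hA, hcard⟩ := indep_of_inducedMatching hM
      rw [← hcard]
      exact le_csSup hbddA ⟨A, hA, rfl⟩
  · apply csSup_le
    · exact ⟨0, ∅, by simp [IsIndep], by simp⟩
    · rintro k ⟨A, hA, rfl⟩
      obtain ⟨M, hM, hcard⟩ := inducedMatching_of_indep hA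
      rw [← hcard]
      exact le_csSup hbddM ⟨M, hM, rfl⟩

end PaperRV
end

section
/- Let G be a simple graph and W_G its whisker graph on vertex set V(G) ∪ {y_v : v ∈ V(G)} with whiskers {v, y_v}. If D is a maximal independent set of G, then D is an independent set of W_G and N_{W_G}(D) is a minimal vertex cover of W_G. -/
/-!
A maximal independent set `D` dominates `G`, so `N_{W_G}(D)` consists of the vertices `v ∉ D`
together with the whiskers `y_v` of the `v ∈ D`. Hence every whisker edge `{v, y_v}` has exactly
one endpoint in `N_{W_G}(D)`, and an edge of `G` with no endpoint in it would join two vertices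
of `D`. A vertex cover inside `N_{W_G}(D)` must pick up the endpoint in `N_{W_G}(D)` of each
whisker edge, which exhausts `N_{W_G}(D)`.
-/

open MvPolynomial

namespace PaperRV

variable {V : Type*}

theorem IsVertexCover.eq_of_subset {H : SimpleGraph V} {C N : Set V}
    (hN : ∀ x ∈ N, ∃ y ∉ N, H.Adj x y) (hCN : C ⊆ N) (hC : IsVertexCover H C) : C = N := by
  refine hCN.antisymm fun x hx => ?_
  obtain ⟨y, hyN, hxy⟩ := hN x hx
  exact (hC hxy).resolve_right fun hyC => hyN (hCN hyC)

theorem exists_adj_of_isIndep_maximal {G : SimpleGraph V} {D : Set V} (hD : IsIndep G D)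
    (hDmax : ∀ B : Set V, IsIndep G B → D ⊆ B → B = D) {v : V} (hv : v ∉ D) :
    ∃ u ∈ D, G.Adj u v := by
  by_contra! hnone
  have hindep : IsIndep G (insert v D) := by
    rintro a (rfl | ha) b (rfl | hb)
    · exact G.loopless.irrefl _
    · exact fun hab => hnone b hb hab.symm
    · exact hnone a ha
    · exact hD a ha b hb
  exact hv (hDmax _ hindep (Set.subset_insert v D) ▸ Set.mem_insert v D)

section whisker

variable {G : SimpleGraph V} {D : Set V}

@[simp]
theorem whisker_adj_inl_inl {u v : V} :
    (whisker G).Adj (Sum.inl u) (Sum.inl v) ↔ G.Adj u v := by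
  simp only [whisker, SimpleGraph.fromRel_adj, ne_eq, Sum.inl.injEq, exists_eq_right_right',
    exists_eq_right', reduceCtorEq, and_false, exists_false, or_false]
  exact ⟨fun ⟨_, h⟩ => h.elim id G.adj_symm, fun h => ⟨h.ne, Or.inl h⟩⟩

@[simp]
theorem whisker_adj_inl_inr {u v : V} :
    (whisker G).Adj (Sum.inl u) (Sum.inr v) ↔ u = v := by
  simp [whisker, eq_comm]

@[simp]
theorem whisker_adj_inr_inl {u v : V} :
    (whisker G).Adj (Sum.inr u) (Sum.inl v) ↔ u = v := by
  rw [SimpleGraph.adj_comm, whisker_adj_inl_inr, eq_comm]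

@[simp]
theorem whisker_not_adj_inr_inr {u v : V} : ¬ (whisker G).Adj (Sum.inr u) (Sum.inr v) := by
  simp [whisker]

theorem whisker_adj_swap (x : V ⊕ V) : (whisker G).Adj x x.swap := by
  cases x <;> simp

theorem IsIndep.image_inl_whisker (hD : IsIndep G D) :
    IsIndep (whisker G) (Sum.inl '' D) := by
  rintro _ ⟨u, hu, rfl⟩ _ ⟨v, hv, rfl⟩
  simpa using hD u hu v hv

theorem inl_mem_nbhd_whisker_iff {v : V} :
    Sum.inl v ∈ nbhd (whisker G) (Sum.inl '' D) ↔ ∃ u ∈ D, G.Adj u v := by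
  simp [nbhd]

theorem inr_mem_nbhd_whisker_iff {v : V} :
    Sum.inr v ∈ nbhd (whisker G) (Sum.inl '' D) ↔ v ∈ D := by
  simp [nbhd]

theorem inl_mem_nbhd_whisker_iff_of_maximal (hD : IsIndep G D)
    (hDmax : ∀ B : Set V, IsIndep G B → D ⊆ B → B = D) {v : V} :
    Sum.inl v ∈ nbhd (whisker G) (Sum.inl '' D) ↔ v ∉ D := by
  rw [inl_mem_nbhd_whisker_iff]
  exact ⟨fun ⟨u, hu, huv⟩ hv => hD u hu v hv huv, exists_adj_of_isIndep_maximal hD hDmax⟩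

theorem isVertexCover_nbhd_whisker_of_maximal (hD : IsIndep G D)
    (hDmax : ∀ B : Set V, IsIndep G B → D ⊆ B → B = D) :
    IsVertexCover (whisker G) (nbhd (whisker G) (Sum.inl '' D)) := by
  rintro (u | u) (v | v) huv
  all_goals simp only [inl_mem_nbhd_whisker_iff_of_maximal hD hDmax, inr_mem_nbhd_whisker_iff]
  · rw [whisker_adj_inl_inl] at huv
    by_contra! h
    exact hD u h.1 v h.2 huv
  · obtain rfl := whisker_adj_inl_inr.mp huv
    exact (em (u ∈ D)).symm
  · obtain rfl := whisker_adj_inr_inl.mp huv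
    exact em (u ∈ D)
  · exact (whisker_not_adj_inr_inr huv).elim

theorem swap_notMem_nbhd_whisker_of_maximal (hD : IsIndep G D)
    (hDmax : ∀ B : Set V, IsIndep G B → D ⊆ B → B = D) {x : V ⊕ V}
    (hx : x ∈ nbhd (whisker G) (Sum.inl '' D)) :
    x.swap ∉ nbhd (whisker G) (Sum.inl '' D) := by
  cases x <;> simp_all [inl_mem_nbhd_whisker_iff_of_maximal hD hDmax, inr_mem_nbhd_whisker_iff]

end whisker

/-- If `D` is a maximal independent set of `G`, then (the copy of) `D` is an independent set of
the whisker graph `W_G` and `N_{W_G}(D)` is a minimal vertex cover of `W_G`. -/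
theorem stmt7 {V : Type*} (G : SimpleGraph V) (D : Set V) (hD : IsIndep G D)
    (hDmax : ∀ B : Set V, IsIndep G B → D ⊆ B → B = D) :
    IsIndep (whisker G) (Sum.inl '' D) ∧
    IsVertexCover (whisker G) (nbhd (whisker G) (Sum.inl '' D)) ∧
    ∀ C ⊆ nbhd (whisker G) (Sum.inl '' D), IsVertexCover (whisker G) C →
      C = nbhd (whisker G) (Sum.inl '' D) :=
  ⟨hD.image_inl_whisker, isVertexCover_nbhd_whisker_of_maximal hD hDmax,
    fun _ hCN hC => hC.eq_of_subset (fun x hx =>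
      ⟨x.swap, swap_notMem_nbhd_whisker_of_maximal hD hDmax hx, whisker_adj_swap x⟩) hCN⟩

end PaperRV
end

section
/- Let G be a Cameron–Walker graph on n vertices with bipartite base on {u_1,…,u_m} ⊔ {w_1,…,w_p}, pendant edges at each u_i and t_j ≥ 0 pendant triangles at each w_j, and let r = m + Σ t_j be the regularity of R/I(G). Then the v-number of I(G) satisfies v(I(G)) ≤ min{r − 1, n − 2r}. -/
open MvPolynomial

namespace PaperRV

variable {V : Type*}

/-- The v-number of (the edge ideal of) `G`: the minimum cardinality of an independent
set `A` such that `N_G(A)` is a vertex cover of `G`. -/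
noncomputable def vNumber (G : SimpleGraph V) [Fintype V] : ℕ :=
  sInf {k | ∃ A : Finset V, IsIndep G ↑A ∧ IsVertexCover G (nbhd G ↑A) ∧ A.card = k}

/-- `G` is a star graph: all edges pass through a common center. -/
def IsStar (G : SimpleGraph V) : Prop :=
  ∃ c, ∀ u v, G.Adj u v → u = c ∨ v = c

/-- `G` is a star triangle: pendant triangles attached to a common center `c`, i.e. every
vertex other than `c` is adjacent to `c` and to exactly one other non-center vertex. -/
def IsStarTriangle (G : SimpleGraph V) : Prop :=
  ∃ c, ∀ v, v ≠ c → G.Adj c v ∧ ∃! w, w ≠ c ∧ G.Adj v w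

/-- Vertex set of a Cameron–Walker graph: base bipartition `Fin m ⊔ Fin p`, `s i` pendant
(whisker) vertices attached to the `i`-th left vertex `u_i`, and `t j` pendant triangles
(each contributing two new vertices) attached to the `j`-th right vertex `w_j`. -/
abbrev CWVert (m p : ℕ) (s : Fin m → ℕ) (t : Fin p → ℕ) : Type :=
  (Fin m ⊕ Fin p) ⊕ ((Σ i : Fin m, Fin (s i)) ⊕ (Σ j : Fin p, Fin (t j) × Fin 2))

/-- The Cameron–Walker graph with connected bipartite base given by the relation `E` on
`Fin m × Fin p`, `s i ≥ 1` pendant edges at each `u_i` and `t j ≥ 0` pendant triangles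
at each `w_j`. -/
def cwGraph (m p : ℕ) (s : Fin m → ℕ) (t : Fin p → ℕ) (E : Fin m → Fin p → Prop) :
    SimpleGraph (CWVert m p s t) :=
  SimpleGraph.fromRel (fun a b =>
    (∃ u w, E u w ∧ a = Sum.inl (Sum.inl u) ∧ b = Sum.inl (Sum.inr w)) ∨
    (∃ i x, a = Sum.inl (Sum.inl i) ∧ b = Sum.inr (Sum.inl ⟨i, x⟩)) ∨
    (∃ j y c, a = Sum.inl (Sum.inr j) ∧ b = Sum.inr (Sum.inr ⟨j, (y, c)⟩)) ∨
    (∃ j y, a = Sum.inr (Sum.inr ⟨j, (y, 0)⟩) ∧ b = Sum.inr (Sum.inr ⟨j, (y, 1)⟩)))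

/-- The bipartite base graph on `Fin m ⊔ Fin p`. -/
def cwBase (m p : ℕ) (E : Fin m → Fin p → Prop) : SimpleGraph (Fin m ⊕ Fin p) :=
  SimpleGraph.fromRel (fun a b => ∃ u w, E u w ∧ a = Sum.inl u ∧ b = Sum.inr w)

/-- The edge ideal `I(G) = ⟨x_u x_v : {u,v} ∈ E(G)⟩` of `G` in `K[x_v : v ∈ V]`. -/
noncomputable def edgeIdeal (K : Type*) [Field K] (G : SimpleGraph V) : Ideal (MvPolynomial V K) :=
  Ideal.span {q | ∃ u v, G.Adj u v ∧ q = X u * X v}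

/-- A finite graded free resolution `0 → F_len → ⋯ → F_1 → F_0 → I → 0` of the ideal `I`
by graded free modules `F i = ⊕_a R(-shift i a)` (so, prepending `R → R/I`, the `F i` form a
graded free resolution of `R/I` shifted by one homological degree). -/
structure GradedFreeResolution (K : Type*) [Field K] (V : Type*)
    (I : Ideal (MvPolynomial V K)) where
  len : ℕ
  rank : ℕ → ℕ
  fin_len : ∀ i, len < i → rank i = 0
  shift : (i : ℕ) → Fin (rank i) → ℕ
  aug : (Fin (rank 0) → MvPolynomial V K) →ₗ[MvPolynomial V K] MvPolynomial V K
  maps : (i : ℕ) →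
    ((Fin (rank (i + 1)) → MvPolynomial V K) →ₗ[MvPolynomial V K] (Fin (rank i) → MvPolynomial V K))
  aug_graded : ∀ a, (aug (Pi.single a 1)).IsHomogeneous (shift 0 a)
  maps_graded : ∀ i a j, ((maps i (Pi.single a 1)) j).IsHomogeneous (shift (i + 1) a - shift i j)
  maps_vanish : ∀ i a j, shift (i + 1) a < shift i j → (maps i (Pi.single a 1)) j = 0
  range_aug : LinearMap.range aug = I
  exact_aug : LinearMap.ker aug = LinearMap.range (maps 0)
  exact_chain : ∀ i, LinearMap.ker (maps i) = LinearMap.range (maps (i + 1))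

/-- The Castelnuovo–Mumford regularity of `R/I` for a nonzero proper homogeneous ideal `I`
generated in positive degrees: since the `F i` above resolve the `(i+1)`-st homological step of
the minimal graded free resolution of `R/I` (whose 0-th step is `R`, contributing `0 - 0 = 0`),
and since the twists of any graded free resolution dominate those of the minimal one,
`reg(R/I) = inf { r | some graded free resolution of I has all shifts `shift i a ≤ r + (i + 1)` }`. -/
noncomputable def regQuot (K : Type*) [Field K] {V : Type*} (I : Ideal (MvPolynomial V K)) : ℕ :=
  sInf {r | ∃ F : GradedFreeResolution K V I, ∀ i a, F.shift i a ≤ r + i + 1}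

/-- `reg K G` is the Castelnuovo–Mumford regularity of `R/I(G)`, `R = K[x_v : v ∈ V]`. -/
noncomputable def reg (K : Type*) [Field K] (G : SimpleGraph V) : ℕ :=
  regQuot K (edgeIdeal K G)

/-!
For `J ⊆ {w_j}` containing every `w_j` that carries a triangle, let `A` consist of `J` together
with one whisker at each `u_i` having no neighbour in `J`. Then `A` is independent and `N(A)`
contains every `u_i` and every triangle vertex, which together meet every edge; so
`v(I(G)) ≤ |A|`. Taking `J` to be all of `{w_j}` gives `v ≤ p = n - 2r - (Σ s_i - m) ≤ n - 2r`.
Taking `J` to be the triangle-carrying `w_j` (plus one `w_j` with two base neighbours, if there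
is one) saves at least one `u_i` against the bound `m + Σ t_j = r`. If neither a triangle nor
such a `w_j` exists, connectivity of the base forces `m = 1` and `G` is a star.
-/

theorem _root_.SimpleGraph.Reachable.apply_eq_of_adj {β : Type*} {G : SimpleGraph V}
    {f : V → β} (hf : ∀ ⦃v w⦄, G.Adj v w → f v = f w) {u v : V} (h : G.Reachable u v) :
    f u = f v := by
  obtain ⟨q⟩ := h
  induction q with
  | nil => rfl
  | cons hadj _ ih => exact (hf hadj).trans ih

open Finset in
theorem _root_.Finset.card_filter_pos_le_sum {ι : Type*} (s : Finset ι) (f : ι → ℕ) :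
    #{i ∈ s | 0 < f i} ≤ ∑ i ∈ s, f i :=
  calc #{i ∈ s | 0 < f i} = ∑ i ∈ s with 0 < f i, 1 := card_eq_sum_ones _
    _ ≤ ∑ i ∈ s with 0 < f i, f i := sum_le_sum fun _ hi => (mem_filter.1 hi).2
    _ ≤ ∑ i ∈ s, f i := sum_le_sum_of_subset (filter_subset _ _)

theorem vNumber_le_card {G : SimpleGraph V} [Fintype V] {A : Finset V} (hA : IsIndep G ↑A)
    (hcover : IsVertexCover G (nbhd G ↑A)) : vNumber G ≤ A.card :=
  Nat.sInf_le ⟨A, hA, hcover, rfl⟩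

section CameronWalker

variable {m p : ℕ} {s : Fin m → ℕ} {t : Fin p → ℕ} {E : Fin m → Fin p → Prop}

open Sum Finset

@[simp] theorem cwBase_adj_inl_inr {i : Fin m} {j : Fin p} :
    (cwBase m p E).Adj (inl i) (inr j) ↔ E i j := by
  simp [cwBase]

@[simp] theorem cwBase_adj_inr_inl {i : Fin m} {j : Fin p} :
    (cwBase m p E).Adj (inr j) (inl i) ↔ E i j := by
  simp [cwBase]

@[simp] theorem not_cwBase_adj_inl_inl {i i' : Fin m} :
    ¬ (cwBase m p E).Adj (inl i) (inl i') := by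
  simp [cwBase]

@[simp] theorem not_cwBase_adj_inr_inr {j j' : Fin p} :
    ¬ (cwBase m p E).Adj (inr j) (inr j') := by
  simp [cwBase]

theorem exists_adj_of_cwBase_connected (hm : 1 ≤ m) (hp : 1 ≤ p)
    (hbase : (cwBase m p E).Connected) : (∀ i, ∃ j, E i j) ∧ ∀ j, ∃ i, E i j := by
  have : Nontrivial (Fin m ⊕ Fin p) := nontrivial_of_ne (inl ⟨0, hm⟩) (inr ⟨0, hp⟩) inl_ne_inr
  have hadj := hbase.preconnected.exists_adj_of_nontrivial
  refine ⟨fun i => ?_, fun j => ?_⟩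
  · obtain ⟨_ | j, h⟩ := hadj (inl i)
    · simp at h
    · exact ⟨j, by simpa using h⟩
  · obtain ⟨i | _, h⟩ := hadj (inr j)
    · exact ⟨i, by simpa using h⟩
    · simp at h

theorem subsingleton_of_cwBase_connected (hbase : (cwBase m p E).Connected)
    (huniq : ∀ j i i', E i j → E i' j → i = i') : Subsingleton (Fin m) := by
  refine ⟨fun i i' => ?_⟩
  -- `u_i ↦ {i}`, `w_j ↦ {base neighbours of w_j}` is constant along the edges of the base.
  let f : Fin m ⊕ Fin p → Set (Fin m) := Sum.elim (fun i => {i}) (fun j => {i | E i j})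
  have hsingleton : ∀ {i j}, E i j → ({i} : Set (Fin m)) = {i' | E i' j} := fun hE =>
    Set.ext fun i' => ⟨fun h => h ▸ hE, fun h => huniq _ _ _ h hE⟩
  have hf : ∀ ⦃a b⦄, (cwBase m p E).Adj a b → f a = f b := by
    rintro (i | j) (i' | j') hadj <;> simp at hadj
    · exact hsingleton hadj
    · exact (hsingleton hadj).symm
  simpa [f] using SimpleGraph.Reachable.apply_eq_of_adj hf (hbase.preconnected (inl i) (inl i'))

theorem isVertexCover_cwGraph {C : Set (CWVert m p s t)} (hU : ∀ i, inl (inl i) ∈ C)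
    (hY : ∀ j y c, inr (inr ⟨j, (y, c)⟩) ∈ C) : IsVertexCover (cwGraph m p s t E) C := by
  intro a b hadj
  obtain ⟨-, h | h⟩ := hadj <;>
    rcases h with ⟨_, _, _, rfl, rfl⟩ | ⟨_, _, rfl, rfl⟩ | ⟨_, _, _, rfl, rfl⟩ |
      ⟨_, _, rfl, rfl⟩ <;>
    simp [hU, hY]

theorem isStar_cwGraph [Subsingleton (Fin m)] (ht : ∀ j, t j = 0) (i₀ : Fin m) :
    IsStar (cwGraph m p s t E) := by
  refine ⟨inl (inl i₀), fun a b hadj => ?_⟩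
  obtain ⟨-, h | h⟩ := hadj <;>
    rcases h with ⟨_, _, _, rfl, rfl⟩ | ⟨_, _, rfl, rfl⟩ | ⟨j, y, _, rfl, rfl⟩ |
      ⟨j, y, rfl, rfl⟩ <;>
    first | exact (y.pos.ne' (ht j)).elim | simp [Subsingleton.elim _ i₀]

theorem card_cwVert : Fintype.card (CWVert m p s t) = m + p + ∑ i, s i + 2 * ∑ j, t j := by
  simp [sum_mul, mul_comm, add_assoc]

def cwWitness (J : Finset (Fin p)) (B : Finset (Fin m)) (x : ∀ i, Fin (s i)) :
    Finset (CWVert m p s t) :=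
  J.image (fun j => inl (inr j)) ∪ B.image (fun i => inr (inl ⟨i, x i⟩))

theorem card_cwWitness_le (J : Finset (Fin p)) (B : Finset (Fin m)) (x : ∀ i, Fin (s i)) :
    #(cwWitness (t := t) J B x) ≤ #J + #B :=
  (card_union_le _ _).trans (add_le_add card_image_le card_image_le)

theorem isIndep_cwWitness (J : Finset (Fin p)) (B : Finset (Fin m)) (x : ∀ i, Fin (s i)) :
    IsIndep (cwGraph m p s t E) ↑(cwWitness J B x : Finset (CWVert m p s t)) := by
  intro a ha b hb
  simp only [cwWitness, coe_union, coe_image, Set.mem_union, Set.mem_image, mem_coe] at ha hb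
  rcases ha with ⟨_, -, rfl⟩ | ⟨_, -, rfl⟩ <;> rcases hb with ⟨_, -, rfl⟩ | ⟨_, -, rfl⟩ <;>
    simp [cwGraph]

theorem isVertexCover_nbhd_cwWitness {J : Finset (Fin p)} (hJ : ∀ j, 0 < t j → j ∈ J)
    {B : Finset (Fin m)} (hB : ∀ i, (∀ j ∈ J, ¬ E i j) → i ∈ B) (x : ∀ i, Fin (s i)) :
    IsVertexCover (cwGraph m p s t E)
      (nbhd (cwGraph m p s t E) ↑(cwWitness J B x : Finset (CWVert m p s t))) := by
  refine isVertexCover_cwGraph (fun i => ?_) (fun j y c => ?_)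
  · by_cases hi : ∃ j ∈ J, E i j
    · obtain ⟨j, hj, hE⟩ := hi
      exact ⟨inl (inr j), by simp [cwWitness, hj], by simp [cwGraph, hE]⟩
    · refine ⟨inr (inl ⟨i, x i⟩), ?_, by simp [cwGraph]⟩
      simp [cwWitness, hB i (by simpa using hi)]
  · exact ⟨inl (inr j), by simp [cwWitness, hJ j y.pos], by fin_cases c <;> simp [cwGraph]⟩

theorem vNumber_cwGraph_le (x : ∀ i, Fin (s i)) {J : Finset (Fin p)}
    (hJ : ∀ j, 0 < t j → j ∈ J) {B : Finset (Fin m)} (hB : ∀ i, (∀ j ∈ J, ¬ E i j) → i ∈ B) :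
    vNumber (cwGraph m p s t E) ≤ #J + #B :=
  (vNumber_le_card (isIndep_cwWitness J B x) (isVertexCover_nbhd_cwWitness hJ hB x)).trans
    (card_cwWitness_le J B x)

theorem vNumber_cwGraph_le_right_card (hm : 1 ≤ m) (hp : 1 ≤ p)
    (hbase : (cwBase m p E).Connected) (x : ∀ i, Fin (s i)) :
    vNumber (cwGraph m p s t E) ≤ p := by
  simpa using vNumber_cwGraph_le (t := t) x (J := univ) (B := ∅) (fun j _ => mem_univ j)
    fun i hi => absurd ((exists_adj_of_cwBase_connected hm hp hbase).1 i) (by simpa using hi)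

theorem vNumber_cwGraph_le_of_triangle (x : ∀ i, Fin (s i)) {i : Fin m} {j : Fin p}
    (hE : E i j) (ht : 0 < t j) : vNumber (cwGraph m p s t E) ≤ m - 1 + ∑ j, t j := by
  refine (vNumber_cwGraph_le x (J := {j | 0 < t j}) (B := univ.erase i)
    (fun j hj => by simpa using hj) fun i' hi' => ?_).trans ?_
  · exact mem_erase.2 ⟨by rintro rfl; exact hi' j (by simpa using ht) hE, mem_univ i'⟩
  · have := card_filter_pos_le_sum univ t
    simp only [card_erase_of_mem (mem_univ i), card_univ, Fintype.card_fin]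
    omega

theorem vNumber_cwGraph_le_of_common_neighbour (x : ∀ i, Fin (s i)) {i i' : Fin m}
    {j : Fin p} (hne : i ≠ i') (hE : E i j) (hE' : E i' j) :
    vNumber (cwGraph m p s t E) ≤ m - 1 + ∑ j, t j := by
  refine (vNumber_cwGraph_le x (J := insert j ({j | 0 < t j} : Finset _))
    (B := (univ.erase i).erase i')
    (fun j' hj' => by simp [hj']) fun k hk => ?_).trans ?_
  · simp only [mem_erase, mem_univ, and_true]
    exact ⟨by rintro rfl; exact hk j (mem_insert_self _ _) hE',
      by rintro rfl; exact hk j (mem_insert_self _ _) hE⟩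
  · have hJ := (card_insert_le j ({j | 0 < t j} : Finset _)).trans
      (Nat.add_le_add_right (card_filter_pos_le_sum univ t) 1)
    have hB : #((univ.erase i).erase i') = m - 1 - 1 := by simp [card_erase_of_mem, hne.symm]
    have hm : 2 ≤ m := by simpa [card_pair hne] using card_le_univ {i, i'}
    omega

theorem vNumber_cwGraph_le_sub_one (hm : 1 ≤ m) (hp : 1 ≤ p)
    (hbase : (cwBase m p E).Connected) (hnotstar : ¬ IsStar (cwGraph m p s t E))
    (x : ∀ i, Fin (s i)) : vNumber (cwGraph m p s t E) ≤ m + ∑ j, t j - 1 := by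
  by_cases htri : ∃ j, 0 < t j
  · obtain ⟨j, ht⟩ := htri
    obtain ⟨i, hE⟩ := (exists_adj_of_cwBase_connected hm hp hbase).2 j
    have := vNumber_cwGraph_le_of_triangle x hE ht
    omega
  by_cases hcommon : ∃ j i i', i ≠ i' ∧ E i j ∧ E i' j
  · obtain ⟨j, i, i', hne, hE, hE'⟩ := hcommon
    have := vNumber_cwGraph_le_of_common_neighbour (t := t) x hne hE hE'
    omega
  push Not at htri hcommon
  have := subsingleton_of_cwBase_connected hbase fun j i i' hE hE' =>
    by_contra fun hne => hcommon j i i' hne hE hE'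
  exact (hnotstar (isStar_cwGraph (fun j => Nat.le_zero.1 (htri j)) ⟨0, hm⟩)).elim

end CameronWalker

theorem stmt13_general (m p : ℕ) (hm : 1 ≤ m) (hp : 1 ≤ p) (s : Fin m → ℕ) (t : Fin p → ℕ)
    (hs : ∀ i, 1 ≤ s i) (E : Fin m → Fin p → Prop)
    (hbase : (cwBase m p E).Connected)
    (hnotstar : ¬ IsStar (cwGraph m p s t E))
    (n r : ℕ) (hn : n = Fintype.card (CWVert m p s t)) (hr : r = m + ∑ j, t j) :
    vNumber (cwGraph m p s t E) ≤ min (r - 1) (n - 2 * r) := by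
  subst hn hr
  let x : ∀ i, Fin (s i) := fun i => ⟨0, hs i⟩
  have hsum : m ≤ ∑ i, s i := by
    simpa using Finset.card_nsmul_le_sum Finset.univ s 1 fun i _ => hs i
  have hright := vNumber_cwGraph_le_right_card (t := t) hm hp hbase x
  refine le_min (vNumber_cwGraph_le_sub_one hm hp hbase hnotstar x) ?_
  rw [card_cwVert]
  omega

/-- For a Cameron–Walker graph `G` on `n` vertices as above, with `r = m + Σ t_j` the
regularity of `R/I(G)`, the v-number satisfies `v(I(G)) ≤ min {r - 1, n - 2r}`. -/
theorem stmt13 (m p : ℕ) (hm : 1 ≤ m) (hp : 1 ≤ p) (s : Fin m → ℕ) (t : Fin p → ℕ)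
    (hs : ∀ i, 1 ≤ s i) (E : Fin m → Fin p → Prop)
    (hbase : (cwBase m p E).Connected)
    (hnotstar : ¬ IsStar (cwGraph m p s t E))
    (hnotstartri : ¬ IsStarTriangle (cwGraph m p s t E))
    (n r : ℕ) (hn : n = Fintype.card (CWVert m p s t)) (hr : r = m + ∑ j, t j)
    (hreg : ∀ (K : Type) [Field K], reg K (cwGraph m p s t E) = r) :
    vNumber (cwGraph m p s t E) ≤ min (r - 1) (n - 2 * r) :=
  stmt13_general m p hm hp s t hs E hbase hnotstar n r hn hr

end PaperRV
end

section
/- Let A be an independent set of a simple graph G such that N_G(A) is a vertex cover of G, and let X_A denote the product of the variables corresponding to vertices of A. Then the ideal quotient (I(G) : X_A) equals the prime monomial ideal generated by the variables in N_G(A). -/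
/-!
Setting the variables of `s` to zero is an `R`-algebra endomorphism of `R[X_σ]` whose kernel is
`⟨X_v : v ∈ s⟩`, so this ideal is prime over a domain. If `C = N_G(A)` is a vertex cover, then
`I(G) ⊆ ⟨X_v : v ∈ C⟩`; since `A` is independent, no variable of `X_A` lies in this prime, which
gives `(I(G) : X_A) ⊆ ⟨X_v : v ∈ C⟩`. Conversely, for `v` adjacent to `u ∈ A`, `X_v X_A` is a
multiple of the edge `X_u X_v`.
-/

open MvPolynomial

namespace PaperRV

variable {V : Type*}

section killVars

variable {σ R : Type*} [CommRing R] (s : Set σ)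

noncomputable def killVars : MvPolynomial σ R →ₐ[R] MvPolynomial σ R :=
  aeval (sᶜ.indicator X)

variable {s}

theorem killVars_X_of_mem {v : σ} (hv : v ∈ s) : killVars (R := R) s (X v) = 0 := by
  simp [killVars, hv]

theorem killVars_X_of_notMem {v : σ} (hv : v ∉ s) : killVars (R := R) s (X v) = X v := by
  simp [killVars, hv]

variable (s)

theorem sub_killVars_mem_span_X_image (f : MvPolynomial σ R) :
    f - killVars s f ∈ Ideal.span (X '' s) := by
  induction f using MvPolynomial.induction_on with
  | C a => simp
  | add p q hp hq =>
    rw [map_add, add_sub_add_comm]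
    exact add_mem hp hq
  | mul_X p v hp =>
    rw [map_mul]
    by_cases hv : v ∈ s
    · rw [killVars_X_of_mem hv, mul_zero, sub_zero]
      exact Ideal.mul_mem_left _ p (Ideal.subset_span ⟨v, hv, rfl⟩)
    · rw [killVars_X_of_notMem hv, ← sub_mul]
      exact Ideal.mul_mem_right _ _ hp

theorem ker_killVars : RingHom.ker (killVars (R := R) s) = Ideal.span (X '' s) := by
  refine le_antisymm (fun f hf => ?_) (Ideal.span_le.mpr ?_)
  · simpa [(RingHom.mem_ker).mp hf] using sub_killVars_mem_span_X_image s f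
  · rintro _ ⟨v, hv, rfl⟩
    exact killVars_X_of_mem hv

theorem isPrime_span_X_image [IsDomain R] :
    (Ideal.span (X '' s : Set (MvPolynomial σ R))).IsPrime :=
  ker_killVars (R := R) s ▸ RingHom.ker_isPrime _

theorem X_notMem_span_X_image [Nontrivial R] {v : σ} (hv : v ∉ s) :
    (X v : MvPolynomial σ R) ∉ Ideal.span (X '' s) := by
  rw [← ker_killVars, RingHom.mem_ker, killVars_X_of_notMem hv]
  exact X_ne_zero v

variable {s}

theorem colon_prod_X_le_span_X_image [IsDomain R] {I : Ideal (MvPolynomial σ R)}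
    (hI : I ≤ Ideal.span (X '' s)) (A : Finset σ) (hA : ∀ v ∈ A, v ∉ s) :
    I.colon (Ideal.span {∏ v ∈ A, (X v : MvPolynomial σ R)}) ≤ Ideal.span (X '' s) := by
  intro f hf
  have hP := isPrime_span_X_image (R := R) s
  refine (hP.mem_or_mem (hI (Ideal.mem_colon_span_singleton.mp hf))).resolve_right ?_
  rw [hP.prod_mem_iff]
  rintro ⟨v, hvA, hv⟩
  exact X_notMem_span_X_image s (hA v hvA) hv

end killVars

section edgeIdeal

variable {K : Type*} [Field K] {G : SimpleGraph V}

theorem edgeIdeal_le_span_X_image {C : Set V} (hC : IsVertexCover G C) :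
    edgeIdeal K G ≤ Ideal.span (X '' C) := by
  rw [edgeIdeal, Ideal.span_le]
  rintro _ ⟨u, v, huv, rfl⟩
  rcases hC huv with hu | hv
  · exact Ideal.mul_mem_right _ _ (Ideal.subset_span ⟨u, hu, rfl⟩)
  · exact Ideal.mul_mem_left _ _ (Ideal.subset_span ⟨v, hv, rfl⟩)

theorem notMem_nbhd_of_isIndep {A : Set V} (hA : IsIndep G A) {v : V} (hv : v ∈ A) :
    v ∉ nbhd G A :=
  fun ⟨u, hu, huv⟩ => hA u hu v hv huv

theorem span_X_image_nbhd_le_colon (A : Finset V) :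
    Ideal.span (X '' nbhd G ↑A) ≤
      (edgeIdeal K G).colon (Ideal.span {∏ v ∈ A, (X v : MvPolynomial V K)}) := by
  classical
  rw [Ideal.span_le]
  rintro _ ⟨v, ⟨u, hu, huv⟩, rfl⟩
  rw [SetLike.mem_coe, Ideal.mem_colon_span_singleton, ← Finset.mul_prod_erase A _ hu,
    ← mul_assoc, mul_comm (X v)]
  exact Ideal.mul_mem_right _ _ (Ideal.subset_span ⟨u, v, huv, rfl⟩)

end edgeIdeal

/-- If `A` is an independent set of `G` with `N_G(A)` a vertex cover of `G`, then
`(I(G) : X_A) = ⟨x_v : v ∈ N_G(A)⟩`, a prime monomial ideal. -/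
theorem stmt18 {V : Type*} (K : Type*) [Field K] (G : SimpleGraph V) (A : Finset V)
    (hA : IsIndep G ↑A) (hcov : IsVertexCover G (nbhd G ↑A)) :
    Submodule.colon (edgeIdeal K G) (Ideal.span {∏ v ∈ A, (X v : MvPolynomial V K)}) =
      Ideal.span (MvPolynomial.X '' (nbhd G ↑A)) ∧
    (Ideal.span (MvPolynomial.X '' (nbhd G ↑A)) : Ideal (MvPolynomial V K)).IsPrime :=
  ⟨le_antisymm
      (colon_prod_X_le_span_X_image (edgeIdeal_le_span_X_image hcov) A
        fun _ hv => notMem_nbhd_of_isIndep hA hv)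
      (span_X_image_nbhd_le_colon A),
    isPrime_span_X_image _⟩

end PaperRV
end
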